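/- Let 𝒜 ∈ ℝ^{n₁×n₂×n₃} be nonzero and (x₁⁰, x₂⁰, x₃⁰) be generated by Algorithm B: among all mode-(2,3) slices 𝒜(e₁^{i₁},·,·) ∈ ℝ^{n₂×n₃}, select index ī₁ maximizing the largest singular value with optimal singular vector pair (x̄₂, x̄₃); set x₃⁰ to the normalized r₃-truncation of x̄₃; then update x₂⁰ and x₁⁰ as normalized truncations of 𝒜(e₁^{ī₁},·,x₃⁰) and 𝒜(·,x₂⁰,x₃⁰) respectively. Then 𝒜(x₁⁰,x₂⁰,x₃⁰) ≥ √(r₂r₃/(n₂n₃r₁)) · v_opt, where v_opt is the maximum of 𝒜(x₁,x₂,x₃) over unit vectors x_j with ‖x_j‖₀ ≤ r_j. -/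

import Mathlib

open Finset

noncomputable def enorm2 {ι : Type*} [Fintype ι] (x : ι → ℝ) : ℝ :=
  Real.sqrt (∑ i, x i ^ 2)

def dot {ι : Type*} [Fintype ι] (x y : ι → ℝ) : ℝ := ∑ i, x i * y i

noncomputable def l0 {ι : Type*} [Fintype ι] (x : ι → ℝ) : ℕ :=
  (Finset.univ.filter fun i => x i ≠ 0).card

def IsTrunc {ι : Type*} [Fintype ι] [DecidableEq ι] (a : ι → ℝ) (r : ℕ) (ar : ι → ℝ) : Prop :=
  ∃ S : Finset ι, S.card = r ∧ (∀ i ∈ S, ar i = a i) ∧ (∀ i ∉ S, ar i = 0) ∧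
    ∀ i ∈ S, ∀ j ∉ S, |a j| ≤ |a i|

noncomputable def lmax {m n' : Type*} [Fintype m] [Fintype n'] (A : Matrix m n' ℝ) : ℝ :=
  sSup {c | ∃ x : n' → ℝ, enorm2 x = 1 ∧ c = enorm2 (A.mulVec x)}

noncomputable def fnorm {m n' : Type*} [Fintype m] [Fintype n'] (A : Matrix m n' ℝ) : ℝ :=
  Real.sqrt (∑ i, ∑ j, A i j ^ 2)

def tri {n1 n2 n3 : ℕ} (A : Fin n1 → Fin n2 → Fin n3 → ℝ)
    (x : Fin n1 → ℝ) (y : Fin n2 → ℝ) (z : Fin n3 → ℝ) : ℝ :=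
  ∑ i, ∑ j, ∑ k, A i j k * x i * y j * z k

def mlin {d : ℕ} {n : Fin d → ℕ} (A : (∀ j, Fin (n j)) → ℝ)
    (x : ∀ j, Fin (n j) → ℝ) : ℝ :=
  ∑ i, A i * ∏ j, x j (i j)

/-!
Every slice `A i` satisfies `|y₂ᵀ (A i) y₃| ≤ λ`, the top singular value of the selected slice, so
for an `r₁`-sparse unit `y₁` the tensor value is at most `λ ∑ |y₁ i| ≤ √r₁ λ`. On the algorithm's
side, pairing a vector with its normalized truncation returns the norm of the truncation, and
truncating to `r` of `n` entries keeps at least the fraction `√(r/n)` of the norm. Hence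
`𝒜(x₁⁰,x₂⁰,x₃⁰) = ‖t₁‖ ≥ ‖t₂‖ ≥ √(r₂/n₂) ‖A(ī,·,x₃⁰)‖ ≥ √(r₂/n₂) λ ‖t₃‖ ≥ √(r₂r₃/(n₂n₃)) λ`:
the first inequality because the `ī`-th entry of the vector truncated to `t₁` is `‖t₂‖`, the
third by pairing `A(ī,·,x₃⁰)` with `x̄₂` and using `x̄₂ᵀ A(ī,·,·) = λ x̄₃ᵀ`.
-/

open Matrix

section Vectors

variable {ι : Type*} [Fintype ι]

lemma enorm2_nonneg (x : ι → ℝ) : 0 ≤ enorm2 x := Real.sqrt_nonneg _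

lemma sq_enorm2 (x : ι → ℝ) : enorm2 x ^ 2 = ∑ i, x i ^ 2 :=
  Real.sq_sqrt (sum_nonneg fun _ _ => sq_nonneg _)

lemma abs_le_enorm2 (x : ι → ℝ) (i : ι) : |x i| ≤ enorm2 x :=
  Real.abs_le_sqrt (single_le_sum (fun j _ => sq_nonneg (x j)) (mem_univ i))

lemma abs_dot_le_enorm2_mul (x y : ι → ℝ) : |dot x y| ≤ enorm2 x * enorm2 y := by
  rw [← Real.sqrt_sq_eq_abs, enorm2, enorm2, ← Real.sqrt_mul (sum_nonneg fun i _ => sq_nonneg _)]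
  exact Real.sqrt_le_sqrt (sum_mul_sq_le_sq_mul_sq univ x y)

lemma dot_le_enorm2_mul (x y : ι → ℝ) : dot x y ≤ enorm2 x * enorm2 y :=
  (le_abs_self _).trans (abs_dot_le_enorm2_mul x y)

lemma sum_abs_le_sqrt_l0_mul_enorm2 (y : ι → ℝ) : ∑ i, |y i| ≤ √(l0 y) * enorm2 y := by
  classical
  set S := univ.filter fun i => y i ≠ 0
  have hsupp : ∑ i, |y i| = ∑ i ∈ S, |y i| :=
    (sum_subset (subset_univ S) fun i _ hi => by simp_all [S]).symm
  have hS : ∑ i ∈ S, |y i| ^ 2 ≤ ∑ i, y i ^ 2 := by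
    simp_rw [sq_abs]
    exact sum_le_sum_of_subset_of_nonneg (subset_univ S) fun i _ _ => sq_nonneg _
  rw [hsupp, enorm2, ← Real.sqrt_mul (Nat.cast_nonneg _)]
  refine Real.le_sqrt_of_sq_le ((sq_sum_le_card_mul_sum_sq).trans ?_)
  exact mul_le_mul_of_nonneg_left hS (Nat.cast_nonneg _)

end Vectors

namespace IsTrunc

variable {ι : Type*} [Fintype ι] [DecidableEq ι] {a t : ι → ℝ} {r : ℕ}

lemma mul_eq_sq (ht : IsTrunc a r t) (i : ι) : a i * t i = t i ^ 2 := by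
  obtain ⟨S, -, hin, hout, -⟩ := ht
  by_cases hi : i ∈ S
  · rw [hin i hi, sq]
  · rw [hout i hi]; ring

lemma dot_eq_sq_enorm2 (ht : IsTrunc a r t) : dot a t = enorm2 t ^ 2 := by
  rw [sq_enorm2]
  exact sum_congr rfl fun i _ => ht.mul_eq_sq i

-- No `t ≠ 0` is needed: `x * x / x = x` holds also at `x = 0`.
lemma dot_normalize (ht : IsTrunc a r t) : dot a (fun i => t i / enorm2 t) = enorm2 t := by
  have hdiv : dot a (fun i => t i / enorm2 t) = dot a t / enorm2 t := by
    simp only [dot, sum_div, mul_div_assoc]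
  rw [hdiv, ht.dot_eq_sq_enorm2, sq, mul_self_div_self]

/- Every discarded entry is dominated by every kept one; summing this over the `r` kept and the
`n - r` discarded entries gives the bound. -/
lemma card_mul_sum_sq_le (ht : IsTrunc a r t) :
    (r : ℝ) * ∑ i, a i ^ 2 ≤ Fintype.card ι * ∑ i, t i ^ 2 := by
  obtain ⟨S, hcard, hin, hout, hdom⟩ := ht
  have hkept : ∑ i, t i ^ 2 = ∑ i ∈ S, a i ^ 2 := by
    rw [← sum_subset (subset_univ S) fun i _ hi => by rw [hout i hi]; ring]
    exact sum_congr rfl fun i hi => by rw [hin i hi]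
  have hdiscard : ∀ j ∈ Sᶜ, (r : ℝ) * a j ^ 2 ≤ ∑ i ∈ S, a i ^ 2 := by
    intro j hj
    rw [← hcard, ← nsmul_eq_mul]
    exact card_nsmul_le_sum S _ _ fun i hi => sq_le_sq.mpr (hdom i hi j (mem_compl.mp hj))
  have hcompl : (r : ℝ) * ∑ j ∈ Sᶜ, a j ^ 2 ≤ (Sᶜ).card * ∑ i ∈ S, a i ^ 2 := by
    rw [mul_sum, ← nsmul_eq_mul]
    exact sum_le_card_nsmul _ _ _ hdiscard
  have hn : (Fintype.card ι : ℝ) = r + (Sᶜ).card := by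
    rw [← hcard]; exact_mod_cast (card_add_card_compl S).symm
  rw [hkept, ← sum_add_sum_compl S, hn]
  linarith

lemma sqrt_div_mul_enorm2_le (ht : IsTrunc a r t) :
    √(r / Fintype.card ι) * enorm2 a ≤ enorm2 t := by
  rw [enorm2, enorm2, ← Real.sqrt_mul (by positivity)]
  refine Real.sqrt_le_sqrt ?_
  rw [div_mul_eq_mul_div]
  exact div_le_of_le_mul₀ (Nat.cast_nonneg _) (sum_nonneg fun _ _ => sq_nonneg _)
    (ht.card_mul_sum_sq_le.trans_eq (mul_comm _ _))

lemma abs_le_enorm2 (ht : IsTrunc a r t) (hr : 1 ≤ r) (i : ι) : |a i| ≤ enorm2 t := by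
  obtain ⟨S, hcard, hin, -, hdom⟩ := ht
  have hkept : ∀ k ∈ S, |a k| ≤ enorm2 t := fun k hk => hin k hk ▸ _root_.abs_le_enorm2 t k
  by_cases hi : i ∈ S
  · exact hkept i hi
  · obtain ⟨k, hk⟩ := card_pos.mp (hcard ▸ hr : 0 < S.card)
    exact (hdom k hk i hi).trans (hkept k hk)

end IsTrunc

section Matrices

variable {m n : Type*} [Fintype m] [Fintype n]

lemma enorm2_mulVec_le_fnorm_mul (M : Matrix m n ℝ) (x : n → ℝ) :
    enorm2 (M *ᵥ x) ≤ fnorm M * enorm2 x := by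
  have hrow : ∀ i, (M *ᵥ x) i ^ 2 ≤ (∑ j, M i j ^ 2) * ∑ j, x j ^ 2 := fun i =>
    sum_mul_sq_le_sq_mul_sq univ (M i) x
  rw [enorm2, fnorm, enorm2, ← Real.sqrt_mul (by positivity), sum_mul]
  exact Real.sqrt_le_sqrt (sum_le_sum fun i _ => hrow i)

lemma le_lmax (M : Matrix m n ℝ) {x : n → ℝ} (hx : enorm2 x = 1) : enorm2 (M *ᵥ x) ≤ lmax M := by
  refine le_csSup ⟨fnorm M, ?_⟩ ⟨x, hx, rfl⟩
  rintro c ⟨z, hz, rfl⟩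
  simpa [hz] using enorm2_mulVec_le_fnorm_mul M z

lemma lmax_nonneg (M : Matrix m n ℝ) : 0 ≤ lmax M :=
  Real.sSup_nonneg (by rintro c ⟨x, -, rfl⟩; exact enorm2_nonneg _)

lemma abs_dot_mulVec_le_lmax (M : Matrix m n ℝ) {y : m → ℝ} {z : n → ℝ} (hy : enorm2 y = 1)
    (hz : enorm2 z = 1) : |dot (M *ᵥ z) y| ≤ lmax M :=
  calc |dot (M *ᵥ z) y| ≤ enorm2 (M *ᵥ z) * enorm2 y := abs_dot_le_enorm2_mul _ _
    _ ≤ lmax M := by rw [hy, mul_one]; exact le_lmax M hz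

lemma mul_dot_le_enorm2_mulVec (M : Matrix m n ℝ) {u : m → ℝ} {v x : n → ℝ} {σ : ℝ}
    (hu : enorm2 u = 1) (hsv : Mᵀ *ᵥ u = fun k => σ * v k) : σ * dot v x ≤ enorm2 (M *ᵥ x) :=
  calc σ * dot v x = dot u (M *ᵥ x) := by
        change σ * dot v x = u ⬝ᵥ M *ᵥ x
        rw [dotProduct_mulVec, ← mulVec_transpose, hsv]
        simp only [dot, dotProduct, mul_sum, mul_assoc]
    _ ≤ enorm2 (M *ᵥ x) := by simpa [hu] using dot_le_enorm2_mul u (M *ᵥ x)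

lemma sum_sum_mul_mul_eq_dot_mulVec (M : Matrix m n ℝ) (y : m → ℝ) (z : n → ℝ) :
    ∑ j, ∑ k, M j k * y j * z k = dot (M *ᵥ z) y := by
  simp only [dot, mulVec, dotProduct, sum_mul]
  exact sum_congr rfl fun j _ => sum_congr rfl fun k _ => by ring

end Matrices

section Tensors

variable {n1 n2 n3 : ℕ}

lemma tri_eq_dot (A : Fin n1 → Fin n2 → Fin n3 → ℝ) (x : Fin n1 → ℝ) (y : Fin n2 → ℝ)
    (z : Fin n3 → ℝ) : tri A x y z = dot (fun i => ∑ j, ∑ k, A i j k * y j * z k) x := by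
  simp only [tri, dot, sum_mul]
  exact sum_congr rfl fun i _ => sum_congr rfl fun j _ => sum_congr rfl fun k _ => by ring

lemma tri_eq_dot_slice (A : Fin n1 → Fin n2 → Fin n3 → ℝ) (x : Fin n1 → ℝ) (y : Fin n2 → ℝ)
    (z : Fin n3 → ℝ) : tri A x y z = dot (fun i => dot (Matrix.of (A i) *ᵥ z) y) x := by
  rw [tri_eq_dot]
  exact congrArg (dot · x) (funext fun i => sum_sum_mul_mul_eq_dot_mulVec (Matrix.of (A i)) y z)

lemma tri_le_sqrt_mul_lmax (A : Fin n1 → Fin n2 → Fin n3 → ℝ) {i₀ : Fin n1}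
    (hsel : ∀ i, lmax (Matrix.of (A i)) ≤ lmax (Matrix.of (A i₀))) {r1 : ℕ}
    {y1 : Fin n1 → ℝ} {y2 : Fin n2 → ℝ} {y3 : Fin n3 → ℝ} (hy1 : enorm2 y1 = 1)
    (hl1 : l0 y1 ≤ r1) (hy2 : enorm2 y2 = 1) (hy3 : enorm2 y3 = 1) :
    tri A y1 y2 y3 ≤ √r1 * lmax (Matrix.of (A i₀)) := by
  set Λ := lmax (Matrix.of (A i₀))
  have hslice : ∀ i, y1 i * dot (Matrix.of (A i) *ᵥ y3) y2 ≤ |y1 i| * Λ := fun i =>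
    calc y1 i * dot (Matrix.of (A i) *ᵥ y3) y2 ≤ |y1 i * dot (Matrix.of (A i) *ᵥ y3) y2| :=
          le_abs_self _
      _ ≤ |y1 i| * Λ := by
          rw [abs_mul]
          exact mul_le_mul_of_nonneg_left ((abs_dot_mulVec_le_lmax _ hy2 hy3).trans (hsel i))
            (abs_nonneg _)
  calc tri A y1 y2 y3 ≤ ∑ i, |y1 i| * Λ := by
        rw [tri_eq_dot_slice, dot]
        exact sum_le_sum fun i _ => (mul_comm _ _).trans_le (hslice i)
    _ ≤ √(l0 y1) * enorm2 y1 * Λ := by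
        rw [← sum_mul]
        exact mul_le_mul_of_nonneg_right (sum_abs_le_sqrt_l0_mul_enorm2 y1) (lmax_nonneg _)
    _ ≤ √r1 * Λ := by
        rw [hy1, mul_one]
        exact mul_le_mul_of_nonneg_right (Real.sqrt_le_sqrt (by exact_mod_cast hl1))
          (lmax_nonneg _)

end Tensors

theorem stmt_19_general {n1 n2 n3 : ℕ} (A : Fin n1 → Fin n2 → Fin n3 → ℝ)
    (r1 r2 r3 : ℕ) (hr1 : 1 ≤ r1 ∧ r1 ≤ n1)
    -- step 1-2: select the slice with largest spectral norm, with its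
    -- normalized leading singular vector pair (xb2, xb3)
    (i1b : Fin n1)
    (hsel : ∀ i1, lmax (Matrix.of (A i1)) ≤ lmax (Matrix.of (A i1b)))
    (xb2 : Fin n2 → ℝ) (xb3 : Fin n3 → ℝ)
    (hxb2 : enorm2 xb2 = 1) (hxb3 : enorm2 xb3 = 1)
    (hsv2 : (Matrix.of (A i1b)).transpose.mulVec xb2 = fun k => lmax (Matrix.of (A i1b)) * xb3 k)
    (t3 : Fin n3 → ℝ) (ht3 : IsTrunc xb3 r3 t3)
    (x3 : Fin n3 → ℝ) (hx3 : x3 = fun k => t3 k / enorm2 t3)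
    -- step 3: sequential truncated updates
    (t2 : Fin n2 → ℝ) (ht2 : IsTrunc (fun j => ∑ k, A i1b j k * x3 k) r2 t2)
    (x2 : Fin n2 → ℝ) (hx2 : x2 = fun j => t2 j / enorm2 t2)
    (t1 : Fin n1 → ℝ) (ht1 : IsTrunc (fun i => ∑ j, ∑ k, A i j k * x2 j * x3 k) r1 t1)
    (x1 : Fin n1 → ℝ) (hx1 : x1 = fun i => t1 i / enorm2 t1) :
    ∀ y1 y2 y3, enorm2 y1 = 1 → l0 y1 ≤ r1 → enorm2 y2 = 1 → l0 y2 ≤ r2 →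
      enorm2 y3 = 1 → l0 y3 ≤ r3 →
      Real.sqrt ((r2 : ℝ) * r3 / ((n2 : ℝ) * n3 * r1)) * tri A y1 y2 y3 ≤
        tri A x1 x2 x3 := by
  intro y1 y2 y3 hy1 hl1 hy2 _ hy3 _
  set M := Matrix.of (A i1b)
  set Λ := lmax M
  have hw : Λ * enorm2 t3 ≤ enorm2 (M *ᵥ x3) :=
    (hx3 ▸ ht3.dot_normalize : dot xb3 x3 = enorm2 t3) ▸ mul_dot_le_enorm2_mulVec M hxb2 hsv2
  have ht3_norm : √(r3 / n3) ≤ enorm2 t3 := by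
    simpa [hxb3] using ht3.sqrt_div_mul_enorm2_le
  have ht2_norm : √(r2 / n2) * enorm2 (M *ᵥ x3) ≤ enorm2 t2 := by
    have h := ht2.sqrt_div_mul_enorm2_le
    rwa [Fintype.card_fin] at h
  have ht1_norm : enorm2 t2 ≤ enorm2 t1 := by
    have hslice : ∑ j, ∑ k, A i1b j k * x2 j * x3 k = enorm2 t2 :=
      (sum_sum_mul_mul_eq_dot_mulVec M x2 x3).trans (hx2 ▸ ht2.dot_normalize)
    exact hslice ▸ (le_abs_self _).trans (ht1.abs_le_enorm2 hr1.1 i1b)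
  have hx : tri A x1 x2 x3 = enorm2 t1 := by
    rw [tri_eq_dot, hx1]
    exact ht1.dot_normalize
  have hconst : √(r2 * r3 / (n2 * n3 * r1)) * √r1 = √(r2 / n2) * √(r3 / n3) := by
    have : (r1 : ℝ) ≠ 0 := by exact_mod_cast (by omega : r1 ≠ 0)
    rw [← Real.sqrt_mul (by positivity), ← Real.sqrt_mul (by positivity)]
    field_simp
  calc √(r2 * r3 / (n2 * n3 * r1)) * tri A y1 y2 y3
      ≤ √(r2 * r3 / (n2 * n3 * r1)) * (√r1 * Λ) :=
        mul_le_mul_of_nonneg_left (tri_le_sqrt_mul_lmax A hsel hy1 hl1 hy2 hy3) (by positivity)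
    _ = √(r2 / n2) * (√(r3 / n3) * Λ) := by rw [← mul_assoc, hconst, mul_assoc]
    _ ≤ √(r2 / n2) * enorm2 (M *ᵥ x3) := by
        gcongr
        exact (mul_le_mul_of_nonneg_right ht3_norm (lmax_nonneg M)).trans (mul_comm _ Λ ▸ hw)
    _ ≤ tri A x1 x2 x3 := hx ▸ ht2_norm.trans ht1_norm

/-- Theorem 3.2: approximation bound of Algorithm B for d = 3:
𝒜(x₁⁰,x₂⁰,x₃⁰) ≥ √(r₂r₃/(n₂n₃r₁))·v_opt. -/
theorem stmt_19 {n1 n2 n3 : ℕ} (A : Fin n1 → Fin n2 → Fin n3 → ℝ) (hA : A ≠ 0)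
    (r1 r2 r3 : ℕ) (hr1 : 1 ≤ r1 ∧ r1 ≤ n1) (hr2 : 1 ≤ r2 ∧ r2 ≤ n2)
    (hr3 : 1 ≤ r3 ∧ r3 ≤ n3)
    -- step 1-2: select the slice with largest spectral norm, with its
    -- normalized leading singular vector pair (xb2, xb3)
    (i1b : Fin n1)
    (hsel : ∀ i1, lmax (Matrix.of (A i1)) ≤ lmax (Matrix.of (A i1b)))
    (xb2 : Fin n2 → ℝ) (xb3 : Fin n3 → ℝ)
    (hxb2 : enorm2 xb2 = 1) (hxb3 : enorm2 xb3 = 1)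
    (hsv1 : (Matrix.of (A i1b)).mulVec xb3 = fun j => lmax (Matrix.of (A i1b)) * xb2 j)
    (hsv2 : (Matrix.of (A i1b)).transpose.mulVec xb2 = fun k => lmax (Matrix.of (A i1b)) * xb3 k)
    (t3 : Fin n3 → ℝ) (ht3 : IsTrunc xb3 r3 t3)
    (x3 : Fin n3 → ℝ) (hx3 : x3 = fun k => t3 k / enorm2 t3)
    -- step 3: sequential truncated updates
    (t2 : Fin n2 → ℝ) (ht2 : IsTrunc (fun j => ∑ k, A i1b j k * x3 k) r2 t2)
    (x2 : Fin n2 → ℝ) (hx2 : x2 = fun j => t2 j / enorm2 t2)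
    (t1 : Fin n1 → ℝ) (ht1 : IsTrunc (fun i => ∑ j, ∑ k, A i j k * x2 j * x3 k) r1 t1)
    (x1 : Fin n1 → ℝ) (hx1 : x1 = fun i => t1 i / enorm2 t1) :
    ∀ y1 y2 y3, enorm2 y1 = 1 → l0 y1 ≤ r1 → enorm2 y2 = 1 → l0 y2 ≤ r2 →
      enorm2 y3 = 1 → l0 y3 ≤ r3 →
      Real.sqrt ((r2 : ℝ) * r3 / ((n2 : ℝ) * n3 * r1)) * tri A y1 y2 y3 ≤
        tri A x1 x2 x3 :=
  stmt_19_general A r1 r2 r3 hr1 i1b hsel xb2 xb3 hxb2 hxb3 hsv2 t3 ht3 x3 hx3 t2 ht2 x2 hx2 t1 ht1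
    x1 hx1
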